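/- arXiv:math/0410146 — 6 statements merged into one kernel-verified Lean document; each statement's English description precedes it below -/
import Mathlib

section
/- If f is continuous, B(R) ⊆ Ω, and ‖f(x)‖ < ‖x‖ for all x ∈ B(R) \ {0}, then for every x ∈ B(R) the iterates f^k(x) converge to 0 as k → ∞; i.e., B(R) is contained in the domain of attraction of 0. -/
/-!
The norm is a Lyapunov function: each ball `closedBall 0 r` with `r < R` is invariant, so the norms
of an orbit decrease to some limit `L`. The orbit is trapped in a compact ball, so it has a cluster
point `y`, and continuity of `f` at `y` forces `‖y‖ = ‖f y‖ = L`. Strict decrease of the norm off `0`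
then gives `y = 0`, hence `L = 0`.
-/

open Metric Filter Topology

section Attraction

variable {E : Type*} [SeminormedAddCommGroup E] {f : E → E} {R : ℝ}

lemma norm_apply_le_of_mem_ball (hf0 : f 0 = 0)
    (hcontr : ∀ x ∈ ball (0 : E) R \ {0}, ‖f x‖ < ‖x‖) {x : E} (hx : x ∈ ball (0 : E) R) :
    ‖f x‖ ≤ ‖x‖ := by
  rcases eq_or_ne x 0 with rfl | hx0
  · rw [hf0]
  · exact (hcontr x ⟨hx, hx0⟩).le

lemma mapsTo_closedBall_of_norm_apply_le (hle : ∀ x ∈ ball (0 : E) R, ‖f x‖ ≤ ‖x‖)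
    {r : ℝ} (hr : r < R) : Set.MapsTo f (closedBall 0 r) (closedBall 0 r) := fun x hx => by
  rw [mem_closedBall_zero_iff] at hx ⊢
  exact (hle x (mem_ball_zero_iff.2 (hx.trans_lt hr))).trans hx

lemma antitone_norm_iterate_of_norm_apply_le (hle : ∀ x ∈ ball (0 : E) R, ‖f x‖ ≤ ‖x‖)
    {x : E} (hx : x ∈ ball (0 : E) R) : Antitone fun k => ‖f^[k] x‖ := by
  have hmaps := mapsTo_closedBall_of_norm_apply_le hle (mem_ball_zero_iff.1 hx)
  refine antitone_nat_of_succ_le fun k => ?_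
  have hk : f^[k] x ∈ closedBall 0 ‖x‖ :=
    hmaps.iterate k (mem_closedBall_zero_iff.2 le_rfl)
  rw [Function.iterate_succ_apply']
  exact hle _ (closedBall_subset_ball (mem_ball_zero_iff.1 hx) hk)

lemma norm_eq_and_norm_apply_eq_of_tendsto_subseq {x y : E} {L : ℝ} {φ : ℕ → ℕ}
    (hL : Tendsto (fun k => ‖f^[k] x‖) atTop (𝓝 L)) (hφ : StrictMono φ)
    (hy : Tendsto (fun k => f^[φ k] x) atTop (𝓝 y)) (hfy : ContinuousAt f y) :
    ‖y‖ = L ∧ ‖f y‖ = L := by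
  refine ⟨tendsto_nhds_unique hy.norm (hL.comp hφ.tendsto_atTop), ?_⟩
  have hsucc : Tendsto (fun k => f^[φ k + 1] x) atTop (𝓝 (f y)) := by
    simpa only [Function.iterate_succ_apply', Function.comp_def] using hfy.tendsto.comp hy
  exact tendsto_nhds_unique hsucc.norm
    (hL.comp (tendsto_atTop_mono (fun k => Nat.le_succ _) hφ.tendsto_atTop))

theorem tendsto_iterate_zero_of_norm_apply_lt [ProperSpace E] (hf0 : f 0 = 0)
    (hcontr : ∀ x ∈ ball (0 : E) R \ {0}, ‖f x‖ < ‖x‖) (hcont : ContinuousOn f (ball 0 R))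
    {x : E} (hx : x ∈ ball (0 : E) R) : Tendsto (fun k => f^[k] x) atTop (𝓝 0) := by
  have hle : ∀ y ∈ ball (0 : E) R, ‖f y‖ ≤ ‖y‖ := fun _ => norm_apply_le_of_mem_ball hf0 hcontr
  have hxR : ‖x‖ < R := mem_ball_zero_iff.1 hx
  have hanti := antitone_norm_iterate_of_norm_apply_le hle hx
  have hL : Tendsto (fun k => ‖f^[k] x‖) atTop (𝓝 (⨅ k, ‖f^[k] x‖)) :=
    tendsto_atTop_ciInf hanti ⟨0, by rintro _ ⟨k, rfl⟩; exact norm_nonneg _⟩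
  have horbit : ∀ k, f^[k] x ∈ closedBall 0 ‖x‖ := fun k =>
    (mapsTo_closedBall_of_norm_apply_le hle hxR).iterate k (mem_closedBall_zero_iff.2 le_rfl)
  obtain ⟨y, hy, φ, hφ, hsub⟩ := (isCompact_closedBall (0 : E) ‖x‖).tendsto_subseq horbit
  have hyR : y ∈ ball (0 : E) R := closedBall_subset_ball hxR hy
  obtain ⟨hyL, hfyL⟩ := norm_eq_and_norm_apply_eq_of_tendsto_subseq hL hφ hsub
    (hcont.continuousAt (isOpen_ball.mem_nhds hyR))
  have hy0 : y = 0 := by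
    by_contra hy0
    exact (hcontr y ⟨hyR, hy0⟩).ne (hfyL.trans hyL.symm)
  rw [hy0, norm_zero] at hyL
  exact tendsto_zero_iff_norm_tendsto_zero.2 (hyL ▸ hL)

end Attraction

theorem stmt4_general {n : ℕ} {Ω : Set (EuclideanSpace ℝ (Fin n))}
    {f : EuclideanSpace ℝ (Fin n) → EuclideanSpace ℝ (Fin n)} (hf0 : f 0 = 0)
    {R : ℝ} (hBR : Metric.ball (0 : EuclideanSpace ℝ (Fin n)) R ⊆ Ω)
    (hcontr : ∀ x ∈ Metric.ball (0 : EuclideanSpace ℝ (Fin n)) R \ {0}, ‖f x‖ < ‖x‖) (hcont : ContinuousOn f Ω) :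
    ∀ x ∈ Metric.ball (0 : EuclideanSpace ℝ (Fin n)) R,
      Tendsto (fun k => f^[k] x) atTop (nhds (0 : EuclideanSpace ℝ (Fin n))) :=
  fun _ hx => tendsto_iterate_zero_of_norm_apply_lt hf0 hcontr (hcont.mono hBR) hx

theorem stmt4 {n : ℕ} {Ω : Set (EuclideanSpace ℝ (Fin n))} (hΩ : IsOpen Ω)
    (h0 : (0 : EuclideanSpace ℝ (Fin n)) ∈ Ω)
    {f : EuclideanSpace ℝ (Fin n) → EuclideanSpace ℝ (Fin n)} (hmaps : Set.MapsTo f Ω Ω) (hf0 : f 0 = 0)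
    {R : ℝ} (hR : 0 < R) (hBR : Metric.ball (0 : EuclideanSpace ℝ (Fin n)) R ⊆ Ω)
    (hcontr : ∀ x ∈ Metric.ball (0 : EuclideanSpace ℝ (Fin n)) R \ {0}, ‖f x‖ < ‖x‖) (hcont : ContinuousOn f Ω) :
    ∀ x ∈ Metric.ball (0 : EuclideanSpace ℝ (Fin n)) R,
      Tendsto (fun k => f^[k] x) atTop (nhds (0 : EuclideanSpace ℝ (Fin n))) :=
  stmt4_general hf0 hBR hcontr hcont
end

section
/- Assume f is continuous, B(R) ⊆ Ω, and ‖f(x)‖ < ‖x‖ for all x ∈ B(R) \ {0}. For any p ≥ 0 and any c with 0 < c ≤ (p+1)R², the sublevel set N_p^c = {x ∈ Ω : Σ_{k=0}^{p} ‖f^k(x)‖² < c} is contained in the domain of attraction D_a(0). -/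
/-!
If the Lyapunov sum is below `(p + 1) R²`, one of the first `p + 1` iterates lies in `B(R)`.
Inside `B(R)` the norm is non-increasing along orbits, so the orbit stays in a compact ball and
its norms decrease to some `L`. A cluster point `a` of the orbit has `‖a‖ = L`, and by continuity
also `‖f a‖ = L`; strict decrease of the norm off `0` forces `a = 0`, hence `L = 0`.
-/

open Metric Filter Finset Function Topology

section Contraction

variable {E : Type*} [NormedAddCommGroup E] {f : E → E} {R : ℝ}

lemma norm_map_le_of_norm_lt (hf0 : f 0 = 0) (hcontr : ∀ x ∈ ball (0 : E) R \ {0}, ‖f x‖ < ‖x‖)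
    {z : E} (hz : ‖z‖ < R) : ‖f z‖ ≤ ‖z‖ := by
  rcases eq_or_ne z 0 with rfl | hne
  · simp [hf0]
  · exact (hcontr z ⟨mem_ball_zero_iff.mpr hz, hne⟩).le

lemma mapsTo_closedBall_of_norm_lt (hf0 : f 0 = 0)
    (hcontr : ∀ x ∈ ball (0 : E) R \ {0}, ‖f x‖ < ‖x‖) {r : ℝ} (hr : r < R) :
    Set.MapsTo f (closedBall 0 r) (closedBall 0 r) := fun z hz => by
  rw [mem_closedBall_zero_iff] at hz ⊢
  exact (norm_map_le_of_norm_lt hf0 hcontr (hz.trans_lt hr)).trans hz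

theorem tendsto_iterate_nhds_zero_of_norm_lt [ProperSpace E] (hf0 : f 0 = 0)
    (hcont : ContinuousOn f (ball 0 R)) (hcontr : ∀ x ∈ ball (0 : E) R \ {0}, ‖f x‖ < ‖x‖)
    {y : E} (hy : ‖y‖ < R) : Tendsto (fun m => f^[m] y) atTop (𝓝 0) := by
  have horbit : ∀ m, f^[m] y ∈ closedBall 0 ‖y‖ := fun m =>
    (mapsTo_closedBall_of_norm_lt hf0 hcontr hy).iterate m (mem_closedBall_zero_iff.mpr le_rfl)
  have hanti : Antitone fun m => ‖f^[m] y‖ := antitone_nat_of_succ_le fun m => by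
    rw [iterate_succ_apply']
    exact norm_map_le_of_norm_lt hf0 hcontr
      ((mem_closedBall_zero_iff.mp (horbit m)).trans_lt hy)
  obtain ⟨L, hL⟩ : ∃ L, Tendsto (fun m => ‖f^[m] y‖) atTop (𝓝 L) :=
    ⟨_, tendsto_atTop_ciInf hanti ⟨0, by rintro _ ⟨m, rfl⟩; exact norm_nonneg _⟩⟩
  obtain ⟨a, ha, φ, hφ, hconv⟩ := (isCompact_closedBall (0 : E) ‖y‖).tendsto_subseq horbit
  have haL : ‖a‖ = L := tendsto_nhds_unique hconv.norm (hL.comp hφ.tendsto_atTop)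
  have haR : a ∈ ball 0 R := mem_ball_zero_iff.mpr ((mem_closedBall_zero_iff.mp ha).trans_lt hy)
  have hfaL : ‖f a‖ = L := by
    have hfconv := ((hcont.continuousAt (isOpen_ball.mem_nhds haR)).tendsto.comp hconv).norm
    refine tendsto_nhds_unique hfconv ?_
    simpa only [iterate_succ_apply', comp_def] using
      ((tendsto_add_atTop_iff_nat 1).mpr hL).comp hφ.tendsto_atTop
  have ha0 : a = 0 := by
    by_contra hne
    exact (hcontr a ⟨haR, hne⟩).ne (hfaL.trans haL.symm)
  rw [tendsto_zero_iff_norm_tendsto_zero]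
  rwa [← haL, ha0, norm_zero] at hL

end Contraction

theorem stmt5_general {n : ℕ} {Ω : Set (EuclideanSpace ℝ (Fin n))}
    {f : EuclideanSpace ℝ (Fin n) → EuclideanSpace ℝ (Fin n)} (hf0 : f 0 = 0)
    {R : ℝ} (hR : 0 < R) (hBR : Metric.ball (0 : EuclideanSpace ℝ (Fin n)) R ⊆ Ω)
    (hcontr : ∀ x ∈ Metric.ball (0 : EuclideanSpace ℝ (Fin n)) R \ {0}, ‖f x‖ < ‖x‖) (hcont : ContinuousOn f Ω)
    (p : ℕ) {c : ℝ} (hc : c ≤ (p + 1) * R ^ 2) :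
    {x ∈ Ω | ∑ k ∈ Finset.range (p + 1), ‖f^[k] x‖ ^ 2 < c} ⊆
      {x ∈ Ω | Tendsto (fun k => f^[k] x) atTop (nhds (0 : EuclideanSpace ℝ (Fin n)))} := by
  rintro x ⟨hxΩ, hsum⟩
  refine ⟨hxΩ, ?_⟩
  obtain ⟨j, -, hj⟩ : ∃ j ∈ range (p + 1), ‖f^[j] x‖ < R := by
    have hlt : ∑ k ∈ range (p + 1), ‖f^[k] x‖ ^ 2 < ∑ _k ∈ range (p + 1), R ^ 2 := by
      rw [sum_const, card_range, nsmul_eq_mul]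
      push_cast
      linarith
    obtain ⟨j, hj, hjR⟩ := exists_lt_of_sum_lt hlt
    exact ⟨j, hj, lt_of_pow_lt_pow_left₀ 2 hR.le hjR⟩
  rw [← tendsto_add_atTop_iff_nat j]
  simpa only [iterate_add_apply] using
    tendsto_iterate_nhds_zero_of_norm_lt hf0 (hcont.mono hBR) hcontr hj

theorem stmt5 {n : ℕ} {Ω : Set (EuclideanSpace ℝ (Fin n))} (hΩ : IsOpen Ω)
    (h0 : (0 : EuclideanSpace ℝ (Fin n)) ∈ Ω)
    {f : EuclideanSpace ℝ (Fin n) → EuclideanSpace ℝ (Fin n)} (hmaps : Set.MapsTo f Ω Ω) (hf0 : f 0 = 0)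
    {R : ℝ} (hR : 0 < R) (hBR : Metric.ball (0 : EuclideanSpace ℝ (Fin n)) R ⊆ Ω)
    (hcontr : ∀ x ∈ Metric.ball (0 : EuclideanSpace ℝ (Fin n)) R \ {0}, ‖f x‖ < ‖x‖) (hcont : ContinuousOn f Ω)
    (p : ℕ) {c : ℝ} (hc0 : 0 < c) (hc : c ≤ (p + 1) * R ^ 2) :
    {x ∈ Ω | ∑ k ∈ Finset.range (p + 1), ‖f^[k] x‖ ^ 2 < c} ⊆
      {x ∈ Ω | Tendsto (fun k => f^[k] x) atTop (nhds (0 : EuclideanSpace ℝ (Fin n)))} :=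
  stmt5_general hf0 hR hBR hcontr hcont p hc
end

section
/- Assume B(R) ⊆ Ω and ‖f(x)‖ < ‖x‖ for all x ∈ B(R) \ {0}. Define N_p = {x ∈ Ω : Σ_{k=0}^{p} ‖f^k(x)‖² < (p+1)R²}. Then N_p ⊆ N_{p+1} for all p ≥ 0. -/
/-! The ball `B(R)` is forward invariant, since `f` fixes `0` and strictly decreases the norm
elsewhere on it. If the average of `‖f^k x‖²` over `k ≤ p` is below `R²`, some iterate `f^k x`
with `k ≤ p` lies in `B(R)`, hence so does `f^(p+1) x`; its term is below `R²`, so the average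
over `k ≤ p + 1` stays below `R²`. -/

open Metric Finset

theorem Set.MapsTo.iterate_mem_of_le {α : Type*} {s : Set α} {f : α → α} (hf : Set.MapsTo f s s)
    {x : α} {k m : ℕ} (hk : f^[k] x ∈ s) (hkm : k ≤ m) : f^[m] x ∈ s := by
  obtain ⟨j, rfl⟩ := Nat.exists_eq_add_of_le hkm
  rw [add_comm, Function.iterate_add_apply]
  exact hf.iterate j hk

section

variable {E : Type*} [SeminormedAddGroup E] {f : E → E} {R : ℝ}

theorem mapsTo_ball_of_norm_map_lt (hf0 : f 0 = 0)
    (hf : ∀ x ∈ ball (0 : E) R \ {0}, ‖f x‖ < ‖x‖) : Set.MapsTo f (ball 0 R) (ball 0 R) := by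
  intro x hx
  rcases eq_or_ne x 0 with rfl | hx0
  · rwa [hf0]
  · have hlt := hf x ⟨hx, hx0⟩
    rw [mem_ball_zero_iff] at hx ⊢
    exact hlt.trans hx

theorem sum_sq_norm_iterate_lt_succ (hR : 0 ≤ R) (hf : Set.MapsTo f (ball 0 R) (ball 0 R))
    {x : E} {p : ℕ} (hx : ∑ k ∈ range (p + 1), ‖f^[k] x‖ ^ 2 < (p + 1) * R ^ 2) :
    ∑ k ∈ range (p + 2), ‖f^[k] x‖ ^ 2 < (p + 2) * R ^ 2 := by
  have mem_ball_iff (y : E) : y ∈ ball 0 R ↔ ‖y‖ ^ 2 < R ^ 2 := by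
    rw [mem_ball_zero_iff, sq_lt_sq₀ (norm_nonneg y) hR]
  obtain ⟨k, hk, hk_mem⟩ : ∃ k ∈ range (p + 1), ‖f^[k] x‖ ^ 2 < R ^ 2 := by
    apply exists_lt_of_sum_lt
    simpa [mul_comm] using hx
  have hlast : f^[p + 1] x ∈ ball 0 R :=
    hf.iterate_mem_of_le ((mem_ball_iff _).2 hk_mem) (mem_range.1 hk).le
  rw [sum_range_succ]
  linarith [(mem_ball_iff _).1 hlast]

end

theorem stmt6_general {n : ℕ} {Ω : Set (EuclideanSpace ℝ (Fin n))}
    {f : EuclideanSpace ℝ (Fin n) → EuclideanSpace ℝ (Fin n)} (hf0 : f 0 = 0)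
    {R : ℝ} (hR : 0 < R)
    (hcontr : ∀ x ∈ Metric.ball (0 : EuclideanSpace ℝ (Fin n)) R \ {0}, ‖f x‖ < ‖x‖) (p : ℕ) :
    {x ∈ Ω | ∑ k ∈ Finset.range (p + 1), ‖f^[k] x‖ ^ 2 < (p + 1) * R ^ 2} ⊆
      {x ∈ Ω | ∑ k ∈ Finset.range (p + 2), ‖f^[k] x‖ ^ 2 < (p + 2) * R ^ 2} := by
  have hball := mapsTo_ball_of_norm_map_lt hf0 hcontr
  rintro x ⟨hxΩ, hx⟩
  exact ⟨hxΩ, sum_sq_norm_iterate_lt_succ hR.le hball hx⟩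

theorem stmt6 {n : ℕ} {Ω : Set (EuclideanSpace ℝ (Fin n))} (hΩ : IsOpen Ω)
    (h0 : (0 : EuclideanSpace ℝ (Fin n)) ∈ Ω)
    {f : EuclideanSpace ℝ (Fin n) → EuclideanSpace ℝ (Fin n)} (hmaps : Set.MapsTo f Ω Ω) (hf0 : f 0 = 0)
    {R : ℝ} (hR : 0 < R) (hBR : Metric.ball (0 : EuclideanSpace ℝ (Fin n)) R ⊆ Ω)
    (hcontr : ∀ x ∈ Metric.ball (0 : EuclideanSpace ℝ (Fin n)) R \ {0}, ‖f x‖ < ‖x‖) (p : ℕ) :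
    {x ∈ Ω | ∑ k ∈ Finset.range (p + 1), ‖f^[k] x‖ ^ 2 < (p + 1) * R ^ 2} ⊆
      {x ∈ Ω | ∑ k ∈ Finset.range (p + 2), ‖f^[k] x‖ ^ 2 < (p + 2) * R ^ 2} :=
  stmt6_general hf0 hR hcontr p
end

section
/- Suppose p̃ ≥ 1, B(R̃) ⊆ Ω, and ‖f^p(x)‖ < ‖x‖ for all p ∈ {p̃, …, 2p̃−1} and all x ∈ B(R̃) \ {0}. Then for every k ≥ p̃ there exists q_k ∈ ℕ such that for all x ∈ B(R̃): ‖f^{(q_k+3)p̃}(x)‖ ≤ ‖f^k(x)‖ ≤ ‖f^{q_k p̃}(x)‖. -/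
/-! If `‖f^[p] x‖ ≤ ‖x‖` on the ball for every `p` in the window `[p̃, 2p̃)`, then by strong induction
(writing `m = (m - p̃) + p̃`) it holds for every `m ≥ p̃`, and the ball is forward invariant under these
iterates. Hence `‖f^[j] x‖ ≤ ‖f^[i] x‖` whenever `j ≥ i + p̃` and `i` is `0` or at least `p̃`. For `k ≥ p̃`
take `q = ⌊k / p̃⌋ - 1`: then `q p̃ + p̃ ≤ k` and `k + p̃ ≤ (q + 3) p̃`. -/

open Metric

section IterateWindow

variable {E : Type*} [SeminormedAddGroup E] {f : E → E} {pt : ℕ} {r : ℝ}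

theorem norm_iterate_le_of_forall_window (hpt : 0 < pt)
    (hwin : ∀ p, pt ≤ p → p < 2 * pt → ∀ x ∈ ball (0 : E) r, ‖f^[p] x‖ ≤ ‖x‖) :
    ∀ m, pt ≤ m → ∀ x ∈ ball (0 : E) r, ‖f^[m] x‖ ≤ ‖x‖ := by
  intro m
  induction m using Nat.strong_induction_on with
  | _ m ih =>
    intro hm x hx
    by_cases hm2 : m < 2 * pt
    · exact hwin m hm hm2 x hx
    have hprev := ih (m - pt) (by omega) (by omega) x hx
    have hprev_mem : f^[m - pt] x ∈ ball (0 : E) r :=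
      mem_ball_zero_iff.2 (hprev.trans_lt (mem_ball_zero_iff.1 hx))
    calc ‖f^[m] x‖ = ‖f^[pt] (f^[m - pt] x)‖ := by
          rw [← Function.iterate_add_apply, Nat.add_sub_cancel' (by omega)]
      _ ≤ ‖f^[m - pt] x‖ := ih pt (by omega) le_rfl _ hprev_mem
      _ ≤ ‖x‖ := hprev

theorem norm_iterate_le_norm_iterate_of_forall_window (hpt : 0 < pt)
    (hwin : ∀ p, pt ≤ p → p < 2 * pt → ∀ x ∈ ball (0 : E) r, ‖f^[p] x‖ ≤ ‖x‖)
    {i j : ℕ} (hi : i = 0 ∨ pt ≤ i) (hij : i + pt ≤ j) {x : E} (hx : x ∈ ball (0 : E) r) :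
    ‖f^[j] x‖ ≤ ‖f^[i] x‖ := by
  have hle := norm_iterate_le_of_forall_window hpt hwin
  have hi_mem : f^[i] x ∈ ball (0 : E) r := by
    rcases hi with rfl | hi
    · exact hx
    · exact mem_ball_zero_iff.2 ((hle i hi x hx).trans_lt (mem_ball_zero_iff.1 hx))
  calc ‖f^[j] x‖ = ‖f^[j - i] (f^[i] x)‖ := by
        rw [← Function.iterate_add_apply, Nat.sub_add_cancel (by omega)]
    _ ≤ ‖f^[i] x‖ := hle (j - i) (by omega) _ hi_mem

end IterateWindow

theorem stmt14_general {n : ℕ}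
    {f : EuclideanSpace ℝ (Fin n) → EuclideanSpace ℝ (Fin n)} (hf0 : f 0 = 0)
    {pt : ℕ} (hpt : 1 ≤ pt)
    {R : ℝ}
    (hcontr : ∀ p, pt ≤ p → p ≤ 2 * pt - 1 →
      ∀ x ∈ Metric.ball (0 : EuclideanSpace ℝ (Fin n)) R \ {0}, ‖f^[p] x‖ < ‖x‖) :
    ∀ k, pt ≤ k → ∃ q : ℕ, ∀ x ∈ Metric.ball (0 : EuclideanSpace ℝ (Fin n)) R,
      ‖f^[(q + 3) * pt] x‖ ≤ ‖f^[k] x‖ ∧ ‖f^[k] x‖ ≤ ‖f^[q * pt] x‖ := by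
  have hwin : ∀ p, pt ≤ p → p < 2 * pt → ∀ x ∈ ball (0 : EuclideanSpace ℝ (Fin n)) R,
      ‖f^[p] x‖ ≤ ‖x‖ := by
    intro p hp hp2 x hx
    rcases eq_or_ne x 0 with rfl | hx0
    · simp [Function.iterate_fixed hf0]
    · exact (hcontr p hp (by omega) x ⟨hx, hx0⟩).le
  intro k hk
  obtain ⟨q, s, hs, rfl⟩ : ∃ q s, s < pt ∧ k = (q + 1) * pt + s :=
    ⟨k / pt - 1, k % pt, Nat.mod_lt _ hpt, by
      rw [Nat.sub_add_cancel ((Nat.one_le_div_iff hpt).2 hk), Nat.div_add_mod']⟩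
  refine ⟨q, fun x hx => ⟨?_, ?_⟩⟩
  · exact norm_iterate_le_norm_iterate_of_forall_window hpt hwin (Or.inr hk) (by nlinarith) hx
  · refine norm_iterate_le_norm_iterate_of_forall_window hpt hwin ?_ (by nlinarith) hx
    rcases q.eq_zero_or_pos with rfl | hq
    · exact Or.inl (zero_mul pt)
    · exact Or.inr (Nat.le_mul_of_pos_left pt hq)

theorem stmt14 {n : ℕ} {Ω : Set (EuclideanSpace ℝ (Fin n))} (hΩ : IsOpen Ω)
    (h0 : (0 : EuclideanSpace ℝ (Fin n)) ∈ Ω)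
    {f : EuclideanSpace ℝ (Fin n) → EuclideanSpace ℝ (Fin n)} (hmaps : Set.MapsTo f Ω Ω) (hf0 : f 0 = 0)
    {pt : ℕ} (hpt : 1 ≤ pt)
    {R : ℝ} (hR : 0 < R) (hBR : Metric.ball (0 : EuclideanSpace ℝ (Fin n)) R ⊆ Ω)
    (hcontr : ∀ p, pt ≤ p → p ≤ 2 * pt - 1 →
      ∀ x ∈ Metric.ball (0 : EuclideanSpace ℝ (Fin n)) R \ {0}, ‖f^[p] x‖ < ‖x‖) :
    ∀ k, pt ≤ k → ∃ q : ℕ, ∀ x ∈ Metric.ball (0 : EuclideanSpace ℝ (Fin n)) R,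
      ‖f^[(q + 3) * pt] x‖ ≤ ‖f^[k] x‖ ∧ ‖f^[k] x‖ ≤ ‖f^[q * pt] x‖ :=
  stmt14_general hf0 hpt hcontr
end

section
/- Suppose f is continuous, p̃ ≥ 1, B(R̃) ⊆ Ω, and ‖f^p(x)‖ < ‖x‖ for all p ∈ {p̃, …, 2p̃−1} and all x ∈ B(R̃) \ {0}. For any p ≥ p̃ and c with 0 < c ≤ (p+1)R̃², the set {x ∈ Ω : Σ_{k=0}^{p} ‖f^k(x)‖² < c} is contained in the domain of attraction D_a(0). -/
/-!
Iterating the window condition shows that `f^[m]` strictly decreases the norm on the punctured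
ball for every `m ≥ p̃`: split `m = (m - p̃) + p̃` until `m` falls into the window. Hence the orbit
of a point of the ball under `g = f^[p̃]` has antitone norms and stays in a compact ball; a cluster
point `w` satisfies `‖g w‖ = ‖w‖`, so `w = 0` and the orbit tends to `0`. Since `f^[m]` does not
increase the norm for `m ≥ p̃`, the whole `f`-orbit follows. Finally, if
`∑_{k ≤ p} ‖f^[k] x‖² < (p + 1) R̃²`, some iterate `f^[k] x` with `k ≤ p` lies in the ball.
-/

open Metric Filter Finset Topology

variable {E : Type*} [NormedAddCommGroup E] {f : E → E} {R : ℝ}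

theorem norm_iterate_lt_of_window {pt : ℕ} (hpt : 0 < pt) (hf0 : f 0 = 0)
    (hwin : ∀ p, pt ≤ p → p < 2 * pt → ∀ x ∈ ball (0 : E) R, x ≠ 0 → ‖f^[p] x‖ < ‖x‖) :
    ∀ m, pt ≤ m → ∀ x ∈ ball (0 : E) R, x ≠ 0 → ‖f^[m] x‖ < ‖x‖ := by
  intro m
  induction m using Nat.strong_induction_on with
  | _ m ih =>
    intro hm x hx hx0
    rcases lt_or_ge m (2 * pt) with hlt | hge
    · exact hwin m hm hlt x hx hx0
    have hsplit : f^[m] x = f^[m - pt] (f^[pt] x) := by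
      rw [← Function.iterate_add_apply, Nat.sub_add_cancel (by omega)]
    have hstep : ‖f^[pt] x‖ < ‖x‖ := hwin pt le_rfl (by omega) x hx hx0
    by_cases hy0 : f^[pt] x = 0
    · rw [hsplit, hy0, Function.iterate_fixed hf0, norm_zero]
      exact norm_pos_iff.2 hx0
    have hy : f^[pt] x ∈ ball (0 : E) R :=
      mem_ball_zero_iff.2 (hstep.trans (mem_ball_zero_iff.1 hx))
    rw [hsplit]
    exact (ih (m - pt) (by omega) (by omega) _ hy hy0).trans hstep

theorem norm_apply_le_of_norm_apply_lt {g : E → E} (hg0 : g 0 = 0)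
    (hlt : ∀ x ∈ ball (0 : E) R, x ≠ 0 → ‖g x‖ < ‖x‖) {x : E} (hx : x ∈ ball (0 : E) R) :
    ‖g x‖ ≤ ‖x‖ := by
  by_cases hx0 : x = 0
  · simp [hx0, hg0]
  · exact (hlt x hx hx0).le

theorem tendsto_iterate_zero_of_norm_lt [ProperSpace E] {g : E → E}
    (hg : ContinuousOn g (ball 0 R)) (hg0 : g 0 = 0)
    (hlt : ∀ x ∈ ball (0 : E) R, x ≠ 0 → ‖g x‖ < ‖x‖) {y : E} (hy : y ∈ ball (0 : E) R) :
    Tendsto (fun j => g^[j] y) atTop (𝓝 0) := by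
  have hbound : ∀ j, ‖g^[j] y‖ ≤ ‖y‖ := by
    intro j
    induction j with
    | zero => simp
    | succ j ih =>
      rw [Function.iterate_succ_apply']
      exact (norm_apply_le_of_norm_apply_lt hg0 hlt (mem_ball_zero_iff.2 (ih.trans_lt
        (mem_ball_zero_iff.1 hy)))).trans ih
  have hmem : ∀ j, g^[j] y ∈ ball (0 : E) R := fun j =>
    mem_ball_zero_iff.2 ((hbound j).trans_lt (mem_ball_zero_iff.1 hy))
  have hanti : Antitone fun j => ‖g^[j] y‖ := antitone_nat_of_succ_le fun j => by
    rw [Function.iterate_succ_apply']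
    exact norm_apply_le_of_norm_apply_lt hg0 hlt (hmem j)
  have hL := tendsto_atTop_ciInf hanti ⟨0, by rintro _ ⟨j, rfl⟩; exact norm_nonneg _⟩
  obtain ⟨w, hw, φ, hφ, hφw⟩ := (isCompact_closedBall (0 : E) ‖y‖).tendsto_subseq
    fun j => mem_closedBall_zero_iff.2 (hbound j)
  have hwR : w ∈ ball (0 : E) R :=
    mem_ball_zero_iff.2 ((mem_closedBall_zero_iff.1 hw).trans_lt (mem_ball_zero_iff.1 hy))
  have hnorm_w : ‖w‖ = ⨅ j, ‖g^[j] y‖ :=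
    tendsto_nhds_unique hφw.norm (hL.comp hφ.tendsto_atTop)
  -- the shifted subsequence `g^[φ j + 1] y` converges both to `g w` and, in norm, to the infimum
  have hnorm_gw : ‖g w‖ = ⨅ j, ‖g^[j] y‖ := by
    have hgw : Tendsto (fun j => g (g^[φ j] y)) atTop (𝓝 (g w)) :=
      (hg.continuousAt (isOpen_ball.mem_nhds hwR)).tendsto.comp hφw
    refine tendsto_nhds_unique hgw.norm ?_
    simpa only [Function.comp_def, Function.iterate_succ_apply'] using
      hL.comp ((tendsto_add_atTop_nat 1).comp hφ.tendsto_atTop)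
  have hw0 : w = 0 := by
    by_contra hw0
    exact (hlt w hwR hw0).ne (hnorm_gw.trans hnorm_w.symm)
  rw [tendsto_zero_iff_norm_tendsto_zero]
  simpa only [← hnorm_w, hw0, norm_zero] using hL

theorem tendsto_iterate_of_tendsto_iterate_iterate {pt : ℕ} (hR : 0 < R)
    (hle : ∀ m, pt ≤ m → ∀ x ∈ ball (0 : E) R, ‖f^[m] x‖ ≤ ‖x‖) {y : E}
    (hsub : Tendsto (fun j => (f^[pt])^[j] y) atTop (𝓝 0)) :
    Tendsto (fun m => f^[m] y) atTop (𝓝 0) := by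
  rw [Metric.tendsto_atTop] at hsub ⊢
  intro ε hε
  obtain ⟨J, hJ⟩ := hsub (min ε R) (lt_min hε hR)
  have hz : ‖f^[pt * J] y‖ < min ε R := by
    simpa only [Function.iterate_mul, dist_zero_right] using hJ J le_rfl
  refine ⟨pt * J + pt, fun m hm => ?_⟩
  have hsplit : f^[m] y = f^[m - pt * J] (f^[pt * J] y) := by
    rw [← Function.iterate_add_apply, Nat.sub_add_cancel (by omega)]
  rw [dist_zero_right, hsplit]
  exact (hle _ (by omega) _ (mem_ball_zero_iff.2 (hz.trans_le (min_le_right _ _)))).trans_lt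
    (hz.trans_le (min_le_left _ _))

theorem stmt16_general {n : ℕ} {Ω : Set (EuclideanSpace ℝ (Fin n))}
    {f : EuclideanSpace ℝ (Fin n) → EuclideanSpace ℝ (Fin n)} (hmaps : Set.MapsTo f Ω Ω) (hf0 : f 0 = 0)
    {pt : ℕ} (hpt : 1 ≤ pt)
    {R : ℝ} (hR : 0 < R) (hBR : Metric.ball (0 : EuclideanSpace ℝ (Fin n)) R ⊆ Ω)
    (hcontr : ∀ p, pt ≤ p → p ≤ 2 * pt - 1 →
      ∀ x ∈ Metric.ball (0 : EuclideanSpace ℝ (Fin n)) R \ {0}, ‖f^[p] x‖ < ‖x‖) (hcont : ContinuousOn f Ω)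
    {p : ℕ} {c : ℝ} (hc : c ≤ (p + 1) * R ^ 2) :
    {x ∈ Ω | ∑ k ∈ Finset.range (p + 1), ‖f^[k] x‖ ^ 2 < c} ⊆
      {x ∈ Ω | Tendsto (fun k => f^[k] x) atTop (nhds (0 : EuclideanSpace ℝ (Fin n)))} := by
  rintro x ⟨hxΩ, hsum⟩
  refine ⟨hxΩ, ?_⟩
  have hlt : ∀ m, pt ≤ m → ∀ y ∈ ball 0 R, y ≠ 0 → ‖f^[m] y‖ < ‖y‖ :=
    norm_iterate_lt_of_window hpt hf0 fun q h1 h2 y hy hy0 => hcontr q h1 (by omega) y ⟨hy, hy0⟩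
  obtain ⟨k, -, hk⟩ : ∃ k ∈ range (p + 1), ‖f^[k] x‖ ^ 2 < R ^ 2 := by
    refine exists_lt_of_sum_lt (hsum.trans_le (hc.trans_eq ?_))
    simp
  have hkR : f^[k] x ∈ ball 0 R :=
    mem_ball_zero_iff.2 ((pow_lt_pow_iff_left₀ (norm_nonneg _) hR.le two_ne_zero).1 hk)
  have hsub := tendsto_iterate_zero_of_norm_lt
    ((hcont.iterate hmaps pt).mono hBR) (Function.iterate_fixed hf0 pt) (hlt pt le_rfl) hkR
  have hfull := tendsto_iterate_of_tendsto_iterate_iterate hR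
    (fun m hm _ => norm_apply_le_of_norm_apply_lt (Function.iterate_fixed hf0 m) (hlt m hm))
    hsub
  refine (tendsto_add_atTop_iff_nat k).1 ?_
  simpa only [Function.iterate_add_apply] using hfull

theorem stmt16 {n : ℕ} {Ω : Set (EuclideanSpace ℝ (Fin n))} (hΩ : IsOpen Ω)
    (h0 : (0 : EuclideanSpace ℝ (Fin n)) ∈ Ω)
    {f : EuclideanSpace ℝ (Fin n) → EuclideanSpace ℝ (Fin n)} (hmaps : Set.MapsTo f Ω Ω) (hf0 : f 0 = 0)
    {pt : ℕ} (hpt : 1 ≤ pt)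
    {R : ℝ} (hR : 0 < R) (hBR : Metric.ball (0 : EuclideanSpace ℝ (Fin n)) R ⊆ Ω)
    (hcontr : ∀ p, pt ≤ p → p ≤ 2 * pt - 1 →
      ∀ x ∈ Metric.ball (0 : EuclideanSpace ℝ (Fin n)) R \ {0}, ‖f^[p] x‖ < ‖x‖) (hcont : ContinuousOn f Ω)
    {p : ℕ} (hp : pt ≤ p) {c : ℝ} (hc0 : 0 < c) (hc : c ≤ (p + 1) * R ^ 2) :
    {x ∈ Ω | ∑ k ∈ Finset.range (p + 1), ‖f^[k] x‖ ^ 2 < c} ⊆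
      {x ∈ Ω | Tendsto (fun k => f^[k] x) atTop (nhds (0 : EuclideanSpace ℝ (Fin n)))} :=
  stmt16_general hmaps hf0 hpt hR hBR hcontr hcont hc
end

section
/- Suppose p̃ ≥ 1, B(R̃) ⊆ Ω, and ‖f^p(x)‖ < ‖x‖ for all p ∈ {p̃, …, 2p̃−1} and all x ∈ B(R̃) \ {0}. Then for every p ≥ 0, Ñ_p ⊆ M̃_{p+p̃}, where Ñ_p = {x ∈ Ω : Σ_{k=0}^{p} ‖f^k(x)‖² < (p+1)R̃²} and M̃_q = {x ∈ Ω : f^q(x) ∈ B(R̃)}. -/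
open Metric Filter Finset

/-!
If the average of `‖f^[k] x‖²` over `k ≤ p` is below `R²`, some iterate `f^[k] x` with `k ≤ p`
lies in the ball `B(R)`. The contraction hypothesis on the window `pt ≤ q < 2 pt` makes `B(R)`
invariant under every `f^[q]` with `q ≥ pt`, because any such `q` is a sum of window lengths;
applying this with `q = p + pt - k ≥ pt` puts `f^[p + pt] x` in `B(R)`.
-/

theorem Set.mapsTo_iterate_of_forall_Ico {α : Type*} {f : α → α} {s : Set α} {pt : ℕ}
    (hpt : 1 ≤ pt) (hwin : ∀ m, pt ≤ m → m < 2 * pt → Set.MapsTo f^[m] s s) :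
    ∀ m, pt ≤ m → Set.MapsTo f^[m] s s := by
  intro m
  induction m using Nat.strong_induction_on with
  | _ m ih =>
    intro hm
    rcases lt_or_ge m (2 * pt) with hsmall | hlarge
    · exact hwin m hm hsmall
    · have hsplit : f^[m] = f^[m - pt] ∘ f^[pt] := by
        rw [← Function.iterate_add]
        congr 1
        omega
      rw [hsplit]
      exact (ih (m - pt) (by omega) (by omega)).comp (ih pt (by omega) le_rfl)

theorem mapsTo_iterate_ball_of_norm_iterate_lt {E : Type*} [SeminormedAddGroup E] {f : E → E}
    (hf0 : f 0 = 0) {pt : ℕ} (hpt : 1 ≤ pt) {R : ℝ}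
    (hcontr : ∀ p, pt ≤ p → p < 2 * pt → ∀ x ∈ ball (0 : E) R \ {0}, ‖f^[p] x‖ < ‖x‖) :
    ∀ m, pt ≤ m → Set.MapsTo f^[m] (ball (0 : E) R) (ball 0 R) := by
  refine Set.mapsTo_iterate_of_forall_Ico hpt fun m hm hm2 y hy => ?_
  by_cases hy0 : y = 0
  · rw [hy0] at hy ⊢
    rwa [Function.iterate_fixed hf0]
  · exact mem_ball_zero_iff.2 ((hcontr m hm hm2 y ⟨hy, hy0⟩).trans (mem_ball_zero_iff.1 hy))

theorem stmt18_general {n : ℕ} {Ω : Set (EuclideanSpace ℝ (Fin n))}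
    {f : EuclideanSpace ℝ (Fin n) → EuclideanSpace ℝ (Fin n)} (hf0 : f 0 = 0)
    {pt : ℕ} (hpt : 1 ≤ pt)
    {R : ℝ} (hR : 0 < R)
    (hcontr : ∀ p, pt ≤ p → p ≤ 2 * pt - 1 →
      ∀ x ∈ Metric.ball (0 : EuclideanSpace ℝ (Fin n)) R \ {0}, ‖f^[p] x‖ < ‖x‖) (p : ℕ) :
    {x ∈ Ω | ∑ k ∈ Finset.range (p + 1), ‖f^[k] x‖ ^ 2 < (p + 1) * R ^ 2} ⊆
      {x ∈ Ω | f^[p + pt] x ∈ Metric.ball (0 : EuclideanSpace ℝ (Fin n)) R} := by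
  rintro x ⟨hxΩ, hsum⟩
  refine ⟨hxΩ, ?_⟩
  have hball := mapsTo_iterate_ball_of_norm_iterate_lt hf0 hpt
    fun q hq hq2 => hcontr q hq (by omega)
  obtain ⟨k, hk, hklt⟩ : ∃ k ∈ range (p + 1), ‖f^[k] x‖ ^ 2 < R ^ 2 := by
    refine exists_lt_of_sum_lt ?_
    simpa [add_comm] using hsum
  have hk_ball : f^[k] x ∈ ball 0 R :=
    mem_ball_zero_iff.2 (lt_of_pow_lt_pow_left₀ 2 hR.le hklt)
  have hk_le : k ≤ p := Nat.lt_succ_iff.1 (mem_range.1 hk)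
  have := hball (p + pt - k) (by omega) hk_ball
  rwa [← Function.iterate_add_apply, Nat.sub_add_cancel (by omega)] at this

theorem stmt18 {n : ℕ} {Ω : Set (EuclideanSpace ℝ (Fin n))} (hΩ : IsOpen Ω)
    (h0 : (0 : EuclideanSpace ℝ (Fin n)) ∈ Ω)
    {f : EuclideanSpace ℝ (Fin n) → EuclideanSpace ℝ (Fin n)} (hmaps : Set.MapsTo f Ω Ω) (hf0 : f 0 = 0)
    {pt : ℕ} (hpt : 1 ≤ pt)
    {R : ℝ} (hR : 0 < R) (hBR : Metric.ball (0 : EuclideanSpace ℝ (Fin n)) R ⊆ Ω)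
    (hcontr : ∀ p, pt ≤ p → p ≤ 2 * pt - 1 →
      ∀ x ∈ Metric.ball (0 : EuclideanSpace ℝ (Fin n)) R \ {0}, ‖f^[p] x‖ < ‖x‖) (p : ℕ) :
    {x ∈ Ω | ∑ k ∈ Finset.range (p + 1), ‖f^[k] x‖ ^ 2 < (p + 1) * R ^ 2} ⊆
      {x ∈ Ω | f^[p + pt] x ∈ Metric.ball (0 : EuclideanSpace ℝ (Fin n)) R} :=
  stmt18_general hf0 hpt hR hcontr p
end
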